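/- arXiv:2112.15235 — 5 statements merged into one kernel-verified Lean document; each statement's English description precedes it below -/
import Mathlib

section
/- Let a, b be real numbers with 0 < a < b (or more generally a,b real nonzero with a² ≠ b²). Then the function ρ₀(x) = ((b-a) sinh((a+b)x) - (a+b) sinh((b-a)x)) / (2ab(b²-a²)) is positive for all x > 0 and negative for all x < 0. -/
private lemma sinh_lt_mul_cosh' {t : ℝ} (ht : 0 < t) : Real.sinh t < t * Real.cosh t := by
  have key : StrictMonoOn (fun x : ℝ => x * Real.cosh x - Real.sinh x) (Set.Ici 0) := by
    apply strictMonoOn_of_deriv_pos (convex_Ici 0)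
    · fun_prop
    · intro x hx
      rw [interior_Ici] at hx
      have h : HasDerivAt (fun x : ℝ => x * Real.cosh x - Real.sinh x)
          (1 * Real.cosh x + x * Real.sinh x - Real.cosh x) x :=
        ((hasDerivAt_id x).mul (Real.hasDerivAt_cosh x)).sub (Real.hasDerivAt_sinh x)
      rw [h.deriv]
      have hx0 : 0 < x := hx
      have := Real.sinh_pos_iff.mpr hx0
      nlinarith [mul_pos hx0 this]
  have := key Set.self_mem_Ici (Set.mem_Ici.mpr ht.le) ht
  simp only [Real.cosh_zero, Real.sinh_zero, mul_zero, zero_mul, sub_zero] at this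
  linarith

private lemma sinh_div_strict' {s t : ℝ} (hs : 0 < s) (hst : s < t) :
    Real.sinh s / s < Real.sinh t / t := by
  have key : StrictMonoOn (fun x : ℝ => Real.sinh x / x) (Set.Ici s) := by
    apply strictMonoOn_of_deriv_pos (convex_Ici s)
    · apply ContinuousOn.div Real.continuous_sinh.continuousOn continuousOn_id
      intro x hx
      exact ne_of_gt (lt_of_lt_of_le hs hx)
    · intro x hx
      rw [interior_Ici] at hx
      have hx0 : 0 < x := hs.trans hx
      have h : HasDerivAt (fun x : ℝ => Real.sinh x / x)
          ((Real.cosh x * x - Real.sinh x * 1) / x ^ 2) x :=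
        (Real.hasDerivAt_sinh x).div (hasDerivAt_id x) hx0.ne'
      rw [h.deriv]
      have h2 := sinh_lt_mul_cosh' hx0
      have hx2 : (0:ℝ) < x ^ 2 := by positivity
      apply div_pos _ hx2
      nlinarith
  exact key Set.self_mem_Ici (Set.mem_Ici.mpr hst.le) hst

private lemma sinh_div_abs' (q x : ℝ) :
    Real.sinh (q * x) / q = Real.sinh (|q| * x) / |q| := by
  rcases abs_cases q with ⟨h, _⟩ | ⟨h, _⟩
  · rw [h]
  · rw [h, neg_mul, Real.sinh_neg]
    rw [div_neg, neg_div, neg_neg]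

private lemma sinh_div_lt' {p q x : ℝ} (hp : p ≠ 0) (hq : q ≠ 0) (hpq : q ^ 2 < p ^ 2)
    (hx : 0 < x) : Real.sinh (q * x) / q < Real.sinh (p * x) / p := by
  have habs : |q| < |p| := by
    nlinarith [sq_abs p, sq_abs q, abs_nonneg p, abs_nonneg q]
  have hq0 : 0 < |q| := abs_pos.mpr hq
  have hp0 : 0 < |p| := abs_pos.mpr hp
  have hs : 0 < |q| * x := mul_pos hq0 hx
  have hst : |q| * x < |p| * x := mul_lt_mul_of_pos_right habs hx
  have h := sinh_div_strict' hs hst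
  rw [sinh_div_abs' q x, sinh_div_abs' p x]
  have e1 : Real.sinh (|q| * x) / |q| = Real.sinh (|q| * x) / (|q| * x) * x := by
    field_simp
  have e2 : Real.sinh (|p| * x) / |p| = Real.sinh (|p| * x) / (|p| * x) * x := by
    field_simp
  rw [e1, e2]
  exact mul_lt_mul_of_pos_right h hx

/-- For real nonzero `a, b` with `a² ≠ b²`, the function
`ρ₀(x) = ((b-a) sinh (a+b)x - (a+b) sinh (b-a)x)/(2ab(b²-a²))` is positive for
`x > 0` and negative for `x < 0`. -/
theorem stmt10 (a b : ℝ) (ha : a ≠ 0) (hb : b ≠ 0) (hab : a ^ 2 ≠ b ^ 2) :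
    let ρ₀ : ℝ → ℝ := fun x =>
      ((b - a) * Real.sinh ((a + b) * x) - (a + b) * Real.sinh ((b - a) * x))
        / (2 * a * b * (b ^ 2 - a ^ 2))
    (∀ x : ℝ, 0 < x → 0 < ρ₀ x) ∧ (∀ x : ℝ, x < 0 → ρ₀ x < 0) := by
  intro ρ₀
  have hp : a + b ≠ 0 := by
    intro h
    apply hab
    have : b = -a := by linarith
    rw [this]; ring
  have hq : b - a ≠ 0 := by
    intro h
    apply hab
    have : b = a := by linarith
    rw [this]
  have hab2 : b ^ 2 - a ^ 2 ≠ 0 := sub_ne_zero.mpr (Ne.symm hab)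
  have hrw : ∀ x : ℝ, ρ₀ x =
      (Real.sinh ((a + b) * x) / (a + b) - Real.sinh ((b - a) * x) / (b - a))
        / (2 * a * b) := by
    intro x
    show ((b - a) * Real.sinh ((a + b) * x) - (a + b) * Real.sinh ((b - a) * x))
        / (2 * a * b * (b ^ 2 - a ^ 2)) = _
    field_simp
    ring
  have hpos : ∀ x : ℝ, 0 < x → 0 < ρ₀ x := by
    intro x hx
    rw [hrw x]
    rcases (mul_ne_zero ha hb).lt_or_gt with hneg | hposab
    · -- a*b < 0 : (a+b)^2 < (b-a)^2, numerator negative, denominator negative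
      have hlt : (a + b) ^ 2 < (b - a) ^ 2 := by nlinarith
      have h := sinh_div_lt' hq hp hlt hx
      apply div_pos_of_neg_of_neg
      · linarith
      · linarith
    · have hlt : (b - a) ^ 2 < (a + b) ^ 2 := by nlinarith
      have h := sinh_div_lt' hp hq hlt hx
      apply div_pos
      · linarith
      · linarith
  refine ⟨hpos, ?_⟩
  intro x hx
  have hodd : ρ₀ (-x) = -ρ₀ x := by
    show ((b - a) * Real.sinh ((a + b) * (-x)) - (a + b) * Real.sinh ((b - a) * (-x)))
        / (2 * a * b * (b ^ 2 - a ^ 2)) = -_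
    rw [mul_neg, mul_neg, Real.sinh_neg, Real.sinh_neg]
    ring
  have := hpos (-x) (by linarith)
  rw [hodd] at this
  linarith
end

section
/- The function g(x) = (cosh x - 1)(e^x - 1) - (sinh x - x)e^x satisfies g(x) > 0 for all x > 0 and g(x) < 0 for all x < 0. -/
/-!
`g' x = x eˣ - sinh x`, and `eˣ sinh x = (e²ˣ - 1) / 2 < x e²ˣ` for `x ≠ 0` by the inequality
`eᵗ - 1 < t eᵗ`, which is `1 - t < e⁻ᵗ` multiplied by `eᵗ`. So `g` is strictly increasing, and
`g 0 = 0`.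
-/

open Real Set

lemma strictMono_of_hasDerivAt_pos_of_ne {f f' : ℝ → ℝ} {a : ℝ}
    (hf : ∀ x, HasDerivAt f (f' x) x) (hf' : ∀ x ≠ a, 0 < f' x) : StrictMono f := by
  have hcont : Continuous f := continuous_iff_continuousAt.2 fun x => (hf x).continuousAt
  refine StrictMonoOn.Iic_union_Ici (a := a) ?_ ?_
  · refine strictMonoOn_of_deriv_pos (convex_Iic a) hcont.continuousOn fun x hx => ?_
    rw [interior_Iic] at hx
    exact (hf x).deriv ▸ hf' x hx.ne
  · refine strictMonoOn_of_deriv_pos (convex_Ici a) hcont.continuousOn fun x hx => ?_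
    rw [interior_Ici] at hx
    exact (hf x).deriv ▸ hf' x hx.ne'

lemma Real.exp_sub_one_lt_mul_exp {t : ℝ} (ht : t ≠ 0) : exp t - 1 < t * exp t := by
  have h : 1 - t < exp (-t) := by
    simpa [add_comm, sub_eq_add_neg] using add_one_lt_exp (neg_ne_zero.2 ht)
  have := mul_lt_mul_of_pos_right h (exp_pos t)
  rw [← exp_add, neg_add_cancel, exp_zero] at this
  linarith

lemma Real.sinh_lt_mul_exp {x : ℝ} (hx : x ≠ 0) : sinh x < x * exp x := by
  have key := exp_sub_one_lt_mul_exp (mul_ne_zero two_ne_zero hx)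
  rw [two_mul, exp_add] at key
  have hsinh : sinh x * exp x = (exp x * exp x - 1) / 2 := by
    rw [sinh_eq, exp_neg]
    field_simp
  refine lt_of_mul_lt_mul_right ?_ (exp_pos x).le
  rw [hsinh]
  linarith

/-- The function `g(x) = (cosh x - 1)(eˣ - 1) - (sinh x - x) eˣ` is positive for
`x > 0` and negative for `x < 0`. -/
theorem stmt12 :
    let g : ℝ → ℝ := fun x =>
      (Real.cosh x - 1) * (Real.exp x - 1) - (Real.sinh x - x) * Real.exp x
    (∀ x : ℝ, 0 < x → 0 < g x) ∧ (∀ x : ℝ, x < 0 → g x < 0) := by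
  intro g
  have hderiv : ∀ x, HasDerivAt g (x * exp x - sinh x) x := fun x => by
    have := (((hasDerivAt_cosh x).sub_const 1).mul ((hasDerivAt_exp x).sub_const 1)).sub
      (((hasDerivAt_sinh x).sub (hasDerivAt_id x)).mul (hasDerivAt_exp x))
    exact this.congr_deriv (by simp only [Pi.sub_apply, id]; ring)
  have hmono : StrictMono g := strictMono_of_hasDerivAt_pos_of_ne (a := 0) hderiv
    fun x hx => sub_pos.2 (sinh_lt_mul_exp hx)
  have hg0 : g 0 = 0 := by simp [g]
  exact ⟨fun x hx => hg0 ▸ hmono hx, fun x hx => hg0 ▸ hmono hx⟩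
end

section
/- The function f(x) = (sin x - x)/(x cos x - sin x) is strictly increasing on (0, π), and consequently f(x) ≤ f(δ) = (sin δ - δ)/(δ cos δ - sin δ) for all 0 < x ≤ δ ≤ π. In particular f(x) < 1 for all x ∈ (0, π). -/
/-!
With `A x = x - sin x` and `B x = sin x - x cos x`, both vanishing at `0`, we have `f = A / B`
and `A' / B' = (1 - cos x) / (x sin x)`. The derivative of the latter has numerator
`(1 - cos x) (x - sin x) > 0`, so by the monotone form of l'Hôpital's rule `A / B` is strictly
increasing on `(0, π]`; the bound `f < 1` is `f x < f π = 1`.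
-/

open Real Set

theorem strictMonoOn_of_hasDerivAt_pos {D : Set ℝ} (hD : Convex ℝ D) {f f' : ℝ → ℝ}
    (hf : ContinuousOn f D) (hf' : ∀ x ∈ interior D, HasDerivAt f (f' x) x)
    (hf'_pos : ∀ x ∈ interior D, 0 < f' x) : StrictMonoOn f D :=
  strictMonoOn_of_hasDerivWithinAt_pos hD hf (fun x hx => (hf' x hx).hasDerivWithinAt) hf'_pos

/-- Monotone form of l'Hôpital's rule. -/
theorem strictMonoOn_div_of_strictMonoOn_deriv_div {A A' B B' : ℝ → ℝ} {a b : ℝ}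
    (hA : ContinuousOn A (Icc a b)) (hA' : ∀ x ∈ Ioo a b, HasDerivAt A (A' x) x)
    (hB : ContinuousOn B (Icc a b)) (hB' : ∀ x ∈ Ioo a b, HasDerivAt B (B' x) x)
    (hAa : A a = 0) (hBa : B a = 0) (hB'_pos : ∀ x ∈ Ioo a b, 0 < B' x)
    (hmono : StrictMonoOn (fun x => A' x / B' x) (Ioo a b)) :
    StrictMonoOn (fun x => A x / B x) (Ioc a b) := by
  have hB_mono : StrictMonoOn B (Icc a b) :=
    strictMonoOn_of_hasDerivAt_pos (convex_Icc a b) hB (by rwa [interior_Icc])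
      (by rwa [interior_Icc])
  have hB_pos : ∀ x ∈ Ioc a b, 0 < B x := fun x hx =>
    hBa ▸ hB_mono (left_mem_Icc.2 (hx.1.le.trans hx.2)) (Ioc_subset_Icc_self hx) hx.1
  -- Cauchy's mean value theorem on `[a, x]` writes `A x / B x` as `A' c / B' c` with `c < x`.
  have hslope : ∀ x ∈ Ioo a b, A x / B x < A' x / B' x := by
    intro x hx
    obtain ⟨c, hc, hcx⟩ := exists_ratio_hasDerivAt_eq_ratio_slope A A' hx.1
      (hA.mono (Icc_subset_Icc_right hx.2.le))
      (fun y hy => hA' y ⟨hy.1, hy.2.trans hx.2⟩) B B'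
      (hB.mono (Icc_subset_Icc_right hx.2.le))
      (fun y hy => hB' y ⟨hy.1, hy.2.trans hx.2⟩)
    have hc_ab : c ∈ Ioo a b := ⟨hc.1, hc.2.trans hx.2⟩
    have hratio : A x / B x = A' c / B' c := by
      rw [div_eq_div_iff (hB_pos x (Ioo_subset_Ioc_self hx)).ne' (hB'_pos c hc_ab).ne']
      rw [hAa, hBa, sub_zero, sub_zero] at hcx
      linarith
    exact hratio ▸ hmono hc_ab hx hc.2
  refine strictMonoOn_of_hasDerivAt_pos (convex_Ioc a b)
    (f' := fun x => (A' x * B x - A x * B' x) / B x ^ 2)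
    ((hA.mono Ioc_subset_Icc_self).div (hB.mono Ioc_subset_Icc_self) fun x hx => (hB_pos x hx).ne')
    ?_ ?_ <;> rw [interior_Ioc] <;> intro x hx
  · exact (hA' x hx).div (hB' x hx) (hB_pos x (Ioo_subset_Ioc_self hx)).ne'
  · have hBx := hB_pos x (Ioo_subset_Ioc_self hx)
    have hcross := (div_lt_div_iff₀ hBx (hB'_pos x hx)).1 (hslope x hx)
    exact div_pos (by linarith) (pow_pos hBx 2)

theorem strictMonoOn_one_sub_cos_div_mul_sin :
    StrictMonoOn (fun x => (1 - cos x) / (x * sin x)) (Ioo 0 π) := by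
  refine strictMonoOn_of_hasDerivAt_pos (convex_Ioo 0 π)
    (f' := fun x => (1 - cos x) * (x - sin x) / (x * sin x) ^ 2) ?_ ?_ ?_
  · exact ContinuousOn.div (by fun_prop) (by fun_prop) fun x hx =>
      (mul_pos hx.1 (sin_pos_of_pos_of_lt_pi hx.1 hx.2)).ne'
  · rw [interior_Ioo]
    intro x hx
    have hsin := sin_pos_of_pos_of_lt_pi hx.1 hx.2
    refine (((hasDerivAt_cos x).const_sub 1).div ((hasDerivAt_id' x).mul (hasDerivAt_sin x))
      (mul_pos hx.1 hsin).ne').congr_deriv ?_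
    simp only [Pi.mul_apply]
    congr 1
    linear_combination x * sin_sq_add_cos_sq x
  · rw [interior_Ioo]
    intro x hx
    have hsin := sin_pos_of_pos_of_lt_pi hx.1 hx.2
    have hcos : cos x < 1 := cos_zero ▸ cos_lt_cos_of_nonneg_of_le_pi le_rfl hx.2.le hx.1
    exact div_pos (mul_pos (sub_pos.2 hcos) (sub_pos.2 (sin_lt hx.1)))
      (pow_pos (mul_pos hx.1 hsin) 2)

/-- `f(x) = (sin x - x)/(x cos x - sin x)` is strictly increasing on `(0, π)`;
consequently `f(x) ≤ f(δ)` for `0 < x ≤ δ ≤ π`, and `f(x) < 1` on `(0, π)`. -/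
theorem stmt16 :
    let f : ℝ → ℝ := fun x => (Real.sin x - x) / (x * Real.cos x - Real.sin x)
    StrictMonoOn f (Set.Ioo 0 Real.pi) ∧
    (∀ x δ : ℝ, 0 < x → x ≤ δ → δ ≤ Real.pi → f x ≤ f δ) ∧
    (∀ x ∈ Set.Ioo (0 : ℝ) Real.pi, f x < 1) := by
  intro f
  have hf : f = fun x => (x - sin x) / (sin x - x * cos x) := by
    ext x
    rw [← neg_div_neg_eq, neg_sub, neg_sub]
  have hmono : StrictMonoOn f (Ioc 0 π) := by
    rw [hf]
    refine strictMonoOn_div_of_strictMonoOn_deriv_div (A' := fun x => 1 - cos x)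
      (B' := fun x => x * sin x) (by fun_prop) (fun x _ => ?_) (by fun_prop) (fun x _ => ?_)
      (by simp) (by simp) (fun x hx => mul_pos hx.1 (sin_pos_of_pos_of_lt_pi hx.1 hx.2))
      strictMonoOn_one_sub_cos_div_mul_sin
    · exact (hasDerivAt_id' x).sub (hasDerivAt_sin x)
    · exact ((hasDerivAt_sin x).sub ((hasDerivAt_id' x).mul (hasDerivAt_cos x))).congr_deriv
        (by ring)
  have hf_pi : f π = 1 := by simp [f, pi_ne_zero]
  refine ⟨hmono.mono Ioo_subset_Ioc_self, fun x δ hx hxδ hδ => ?_, fun x hx => ?_⟩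
  · exact hmono.monotoneOn ⟨hx, hxδ.trans hδ⟩ ⟨hx.trans_le hxδ, hδ⟩ hxδ
  · exact hf_pi ▸ hmono ⟨hx.1, hx.2.le⟩ ⟨pi_pos, le_rfl⟩ hx.2
end

section
/- Let λ₀, λ₁, λ₂, λ₃ be complex numbers, let Φ₂ = Φ_{(λ₀,λ₁)}, Φ₂' its derivative, Φ₄ = Φ_{(λ₀,λ₁,λ₂,λ₃)}, and define ρ₀(x) = Φ₄'(x)Φ₂(x) - Φ₄(x)Φ₂'(x). Then ρ₀'(x) - (λ₀+λ₁)ρ₀(x) = Φ_{(λ₀,λ₁)}(x)·Φ_{(λ₂,λ₃)}(x) for all x. -/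
open scoped ContDiff

/-- The first-order operator `D_λ f = f' - λ f` acting on complex-valued functions. -/
noncomputable def Dop (l : ℂ) (f : ℝ → ℂ) : ℝ → ℂ := fun x => deriv f x - l * f x

lemma exp_hasDerivAt (c : ℂ) (x : ℝ) :
    HasDerivAt (fun x : ℝ => Complex.exp (c * x)) (c * Complex.exp (c * x)) x := by
  have h1 : HasDerivAt (fun x : ℝ => (x : ℂ)) 1 x := by
    simpa using (hasDerivAt_id x).ofReal_comp
  have h2 : HasDerivAt (fun x : ℝ => c * (x : ℂ)) c x := by simpa using h1.const_mul c
  simpa [mul_comm] using h2.cexp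

lemma zero_of_first_order (c : ℂ) (f : ℝ → ℂ) (hf : Differentiable ℝ f)
    (hode : ∀ x, deriv f x = c * f x) (h0 : f 0 = 0) : ∀ x, f x = 0 := by
  have hgd : ∀ x, HasDerivAt (fun x => f x * Complex.exp (-c * x)) 0 x := by
    intro x
    have h := (hf x).hasDerivAt.mul (exp_hasDerivAt (-c) x)
    exact h.congr_deriv (by rw [hode x]; ring)
  have hconst : ∀ x, f x * Complex.exp (-c * x) = f 0 * Complex.exp (-c * (0 : ℝ)) :=
    fun x => is_const_of_deriv_eq_zero (fun y => (hgd y).differentiableAt)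
      (fun y => (hgd y).deriv) x 0
  intro x
  have h1 : f x * Complex.exp (-c * x) = 0 := by simpa [h0] using hconst x
  rcases mul_eq_zero.mp h1 with h | h
  · exact h
  · exact absurd h (Complex.exp_ne_zero _)

lemma Dop_contDiff {f : ℝ → ℂ} (hf : ContDiff ℝ ∞ f) (c : ℂ) : ContDiff ℝ ∞ (Dop c f) := by
  have hd : ContDiff ℝ ∞ (deriv f) := (contDiff_infty_iff_deriv.mp hf).2
  exact hd.sub (contDiff_const.mul hf)

lemma deriv_Dop {f : ℝ → ℂ} (hf : ContDiff ℝ ∞ f) (c : ℂ) (x : ℝ) :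
    deriv (Dop c f) x = deriv (deriv f) x - c * deriv f x := by
  have hd : Differentiable ℝ (deriv f) :=
    (contDiff_infty_iff_deriv.mp (contDiff_infty_iff_deriv.mp hf).2).1
  have h : HasDerivAt (Dop c f) (deriv (deriv f) x - c * deriv f x) x := by
    have h1 := (hd x).hasDerivAt
    have h2 := HasDerivAt.const_mul c ((contDiff_infty_iff_deriv.mp hf).1 x).hasDerivAt
    exact h1.sub h2
  exact h.deriv

lemma deriv_Dop' {f : ℝ → ℂ} (hf : ContDiff ℝ ∞ f) (c : ℂ) :
    deriv (Dop c f) = Dop c (deriv f) :=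
  funext fun x => deriv_Dop hf c x

lemma Dop_expand {f : ℝ → ℂ} (hf : ContDiff ℝ ∞ f) (a b : ℂ) (x : ℝ) :
    Dop a (Dop b f) x = deriv (deriv f) x - (a + b) * deriv f x + a * b * f x := by
  show deriv (Dop b f) x - a * (Dop b f x) = _
  rw [deriv_Dop hf b x]
  show _ - a * (deriv f x - b * f x) = _
  ring

lemma Dop_comm {f : ℝ → ℂ} (hf : ContDiff ℝ ∞ f) (a b : ℂ) :
    Dop a (Dop b f) = Dop b (Dop a f) :=
  funext fun x => by rw [Dop_expand hf a b x, Dop_expand hf b a x]; ring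

lemma Dop_sub {f g : ℝ → ℂ} (hf : Differentiable ℝ f) (hg : Differentiable ℝ g) (c : ℂ) (x : ℝ) :
    Dop c (fun x => f x - g x) x = Dop c f x - Dop c g x := by
  show deriv (fun y => f y - g y) x - c * (f x - g x) = (deriv f x - c * f x) - (deriv g x - c * g x)
  rw [deriv_fun_sub (hf x) (hg x)]; ring

lemma Dop_sub' {f g : ℝ → ℂ} (hf : Differentiable ℝ f) (hg : Differentiable ℝ g) (c : ℂ) :
    Dop c (fun x => f x - g x) = fun x => Dop c f x - Dop c g x :=
  funext fun x => Dop_sub hf hg c x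

/-- With `Φ₂ = Φ_{(λ₀,λ₁)}`, `Φ₂₃ = Φ_{(λ₂,λ₃)}`, `Φ₄ = Φ_{(λ₀,λ₁,λ₂,λ₃)}` and
`ρ₀ = Φ₄'Φ₂ - Φ₄Φ₂'`, one has `ρ₀' - (λ₀+λ₁)ρ₀ = Φ₂ Φ₂₃`. -/
theorem stmt17 (l0 l1 l2 l3 : ℂ) (Φ2 Φ23 Φ4 : ℝ → ℂ)
    (hΦ2 : ContDiff ℝ (⊤ : ℕ∞) Φ2)
    (hΦ2ode : ∀ x : ℝ, Dop l0 (Dop l1 Φ2) x = 0)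
    (hΦ2z : Φ2 0 = 0) (hΦ2o : deriv Φ2 0 = 1)
    (hΦ23 : ContDiff ℝ (⊤ : ℕ∞) Φ23)
    (hΦ23ode : ∀ x : ℝ, Dop l2 (Dop l3 Φ23) x = 0)
    (hΦ23z : Φ23 0 = 0) (hΦ23o : deriv Φ23 0 = 1)
    (hΦ4 : ContDiff ℝ (⊤ : ℕ∞) Φ4)
    (hΦ4ode : ∀ x : ℝ, Dop l0 (Dop l1 (Dop l2 (Dop l3 Φ4))) x = 0)
    (hΦ4z : ∀ j < 3, iteratedDeriv j Φ4 0 = 0)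
    (hΦ4o : iteratedDeriv 3 Φ4 0 = 1) :
    ∀ x : ℝ,
      deriv (fun y => deriv Φ4 y * Φ2 y - Φ4 y * deriv Φ2 y) x
        - (l0 + l1) * (deriv Φ4 x * Φ2 x - Φ4 x * deriv Φ2 x)
      = Φ2 x * Φ23 x := by
  have h2 : ContDiff ℝ ∞ Φ2 := hΦ2.of_le (mod_cast le_top)
  have h23 : ContDiff ℝ ∞ Φ23 := hΦ23.of_le (mod_cast le_top)
  have h4 : ContDiff ℝ ∞ Φ4 := hΦ4.of_le (mod_cast le_top)
  have h2d : ContDiff ℝ ∞ (deriv Φ2) := (contDiff_infty_iff_deriv.mp h2).2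
  have h4d : ContDiff ℝ ∞ (deriv Φ4) := (contDiff_infty_iff_deriv.mp h4).2
  -- commute the four first-order factors
  have e1 : Dop l0 (Dop l1 (Dop l2 (Dop l3 Φ4))) = Dop l2 (Dop l3 (Dop l0 (Dop l1 Φ4))) := by
    rw [Dop_comm (Dop_contDiff h4 l3) l1 l2, Dop_comm h4 l1 l3,
        Dop_comm (Dop_contDiff (Dop_contDiff h4 l1) l3) l0 l2,
        Dop_comm (Dop_contDiff h4 l1) l0 l3]
  set ψ : ℝ → ℂ := Dop l0 (Dop l1 Φ4) with hψdef
  have hψ : ContDiff ℝ ∞ ψ := Dop_contDiff (Dop_contDiff h4 l1) l0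
  have hψode : ∀ x, Dop l2 (Dop l3 ψ) x = 0 := fun x => by
    rw [hψdef, ← e1]; exact hΦ4ode x
  -- initial values of Φ4
  have hz0 : Φ4 0 = 0 := by simpa using hΦ4z 0 (by norm_num)
  have hz1 : deriv Φ4 0 = 0 := by simpa [iteratedDeriv_one] using hΦ4z 1 (by norm_num)
  have hz2 : deriv (deriv Φ4) 0 = 0 := by
    have h := hΦ4z 2 (by norm_num)
    rwa [show (2 : ℕ) = 1 + 1 from rfl, iteratedDeriv_succ, iteratedDeriv_one] at h
  have hz3 : deriv (deriv (deriv Φ4)) 0 = 1 := by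
    have h := hΦ4o
    rwa [show (3 : ℕ) = 1 + 1 + 1 from rfl, iteratedDeriv_succ, iteratedDeriv_succ,
      iteratedDeriv_one] at h
  -- initial values of ψ
  have hψ0 : ψ 0 = 0 := by
    rw [hψdef, Dop_expand h4 l0 l1 0, hz0, hz1, hz2]; ring
  have hψder : deriv ψ = Dop l0 (Dop l1 (deriv Φ4)) := by
    rw [hψdef, deriv_Dop' (Dop_contDiff h4 l1) l0, deriv_Dop' h4 l1]
  have hψ1 : deriv ψ 0 = 1 := by
    rw [hψder, Dop_expand h4d l0 l1 0, hz1, hz2, hz3]; ring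
  -- ψ - Φ23 satisfies the second-order ODE with zero initial data
  have hdiffψ : Differentiable ℝ ψ := (contDiff_infty_iff_deriv.mp hψ).1
  have hdiff23 : Differentiable ℝ Φ23 := (contDiff_infty_iff_deriv.mp h23).1
  have hdiffh : Differentiable ℝ (fun y => ψ y - Φ23 y) := hdiffψ.sub hdiff23
  have hderh : ∀ x, deriv (fun y => ψ y - Φ23 y) x = deriv ψ x - deriv Φ23 x :=
    fun x => deriv_sub (hdiffψ x) (hdiff23 x)
  have hode23exp : ∀ x, Dop l2 (Dop l3 (fun y => ψ y - Φ23 y)) x = 0 := by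
    intro x
    rw [Dop_sub' hdiffψ hdiff23 l3,
      Dop_sub ((contDiff_infty_iff_deriv.mp (Dop_contDiff hψ l3)).1)
        ((contDiff_infty_iff_deriv.mp (Dop_contDiff h23 l3)).1) l2 x,
      hψode x, hΦ23ode x, sub_zero]
  have hu_diff : Differentiable ℝ (Dop l3 (fun y => ψ y - Φ23 y)) :=
    (contDiff_infty_iff_deriv.mp (Dop_contDiff (hψ.sub h23) l3)).1
  have hu0 : Dop l3 (fun y => ψ y - Φ23 y) 0 = 0 := by
    show deriv (fun y => ψ y - Φ23 y) 0 - l3 * (ψ 0 - Φ23 0) = 0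
    rw [hderh 0, hψ1, hΦ23o, hψ0, hΦ23z]; ring
  have huode : ∀ x, deriv (Dop l3 (fun y => ψ y - Φ23 y)) x
      = l2 * Dop l3 (fun y => ψ y - Φ23 y) x := by
    intro x
    have h' : deriv (Dop l3 fun y => ψ y - Φ23 y) x
        - l2 * (Dop l3 (fun y => ψ y - Φ23 y) x) = 0 := hode23exp x
    exact sub_eq_zero.mp h'
  have hu_zero : ∀ x, Dop l3 (fun y => ψ y - Φ23 y) x = 0 :=
    zero_of_first_order l2 _ hu_diff huode hu0
  have hhode : ∀ x, deriv (fun y => ψ y - Φ23 y) x = l3 * (ψ x - Φ23 x) := by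
    intro x
    have h' : deriv (fun y => ψ y - Φ23 y) x - l3 * (ψ x - Φ23 x) = 0 := hu_zero x
    exact sub_eq_zero.mp h'
  have hh0 : ψ 0 - Φ23 0 = 0 := by rw [hψ0, hΦ23z]; ring
  have hh_zero := zero_of_first_order l3 (fun y => ψ y - Φ23 y) hdiffh hhode hh0
  have hψeq : ∀ x, ψ x = Φ23 x := fun x => sub_eq_zero.mp (hh_zero x)
  -- final computation
  intro x
  have hρ : deriv (fun y => deriv Φ4 y * Φ2 y - Φ4 y * deriv Φ2 y) x
      = deriv (deriv Φ4) x * Φ2 x - Φ4 x * deriv (deriv Φ2) x := by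
    have hA : HasDerivAt (fun y => deriv Φ4 y * Φ2 y)
        (deriv (deriv Φ4) x * Φ2 x + deriv Φ4 x * deriv Φ2 x) x :=
      (((contDiff_infty_iff_deriv.mp h4d).1 x).hasDerivAt).mul
        (((contDiff_infty_iff_deriv.mp h2).1 x).hasDerivAt)
    have hB : HasDerivAt (fun y => Φ4 y * deriv Φ2 y)
        (deriv Φ4 x * deriv Φ2 x + Φ4 x * deriv (deriv Φ2) x) x :=
      (((contDiff_infty_iff_deriv.mp h4).1 x).hasDerivAt).mul
        (((contDiff_infty_iff_deriv.mp h2d).1 x).hasDerivAt)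
    rw [(hA.fun_sub hB).deriv]; ring
  have h2ode : deriv (deriv Φ2) x = (l0 + l1) * deriv Φ2 x - l0 * l1 * Φ2 x := by
    have h := hΦ2ode x
    rw [Dop_expand h2 l0 l1 x] at h
    linear_combination h
  have hψx : deriv (deriv Φ4) x - (l0 + l1) * deriv Φ4 x + l0 * l1 * Φ4 x = Φ23 x := by
    rw [← Dop_expand h4 l0 l1 x, ← hψdef]
    exact hψeq x
  rw [hρ, h2ode, ← hψx]; ring
end

section
/- Let λ₀,...,λ₃ be real numbers and define ρ₀(x) = Φ'_{(λ₀,...,λ₃)}(x)Φ_{(λ₀,λ₁)}(x) - Φ_{(λ₀,...,λ₃)}(x)Φ'_{(λ₀,λ₁)}(x). Then ρ₀(x) > 0 for all x > 0 and ρ₀(x) < 0 for all x < 0. -/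
open scoped ContDiff



private lemma diff_of_inf {f : ℝ → ℝ} (hf : ContDiff ℝ ∞ f) : Differentiable ℝ f :=
  hf.differentiable (by simp)

/-- The first-order operator `D_λ f = f' - λ f` acting on real-valued functions. -/
noncomputable def DopR (l : ℝ) (f : ℝ → ℝ) : ℝ → ℝ := fun x => deriv f x - l * f x

private lemma DopR_contDiff {f : ℝ → ℝ} (hf : ContDiff ℝ ∞ f) (l : ℝ) :
    ContDiff ℝ ∞ (DopR l f) :=
  ((contDiff_infty_iff_deriv.mp hf).2).sub (contDiff_const.mul hf)

private lemma deriv_comb3 {u v w : ℝ → ℝ} (hu : Differentiable ℝ u)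
    (hv : Differentiable ℝ v) (hw : Differentiable ℝ w) (a b x : ℝ) :
    deriv (fun y => u y + a * v y + b * w y) x
      = deriv u x + a * deriv v x + b * deriv w x :=
  ((((hu x).hasDerivAt.add ((hv x).hasDerivAt.const_mul a)).add
    ((hw x).hasDerivAt.const_mul b))).deriv

private lemma Dop2 {f : ℝ → ℝ} (hf : ContDiff ℝ ∞ f) (a b x : ℝ) :
    DopR a (DopR b f) x = deriv (deriv f) x - (a + b) * deriv f x + a * b * f x := by
  have hf' : Differentiable ℝ f := diff_of_inf hf
  have hdf : Differentiable ℝ (deriv f) := diff_of_inf (contDiff_infty_iff_deriv.mp hf).2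
  unfold DopR
  have h : deriv (fun x => deriv f x - b * f x) x
      = deriv (deriv f) x - b * deriv f x :=
    ((hdf x).hasDerivAt.sub ((hf' x).hasDerivAt.const_mul b)).deriv
  rw [h]; ring

/-- If `g' = l g` and `g 0 = 1`, then `g = exp (l x)`. -/
private lemma eq_exp_of_deriv {g : ℝ → ℝ} (hg : Differentiable ℝ g) (l : ℝ)
    (hode : ∀ x, deriv g x = l * g x) (h0 : g 0 = 1) :
    ∀ x, g x = Real.exp (l * x) := by
  set F : ℝ → ℝ := fun x => Real.exp (-l * x) * g x with hF
  have hFd : ∀ x, HasDerivAt F 0 x := by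
    intro x
    have he : HasDerivAt (fun x : ℝ => Real.exp (-l * x)) (Real.exp (-l * x) * (-l)) x := by
      have := ((hasDerivAt_id x).const_mul (-l)).exp
      simpa [mul_comm] using this
    have := he.mul (hg x).hasDerivAt
    have h2 : Real.exp (-l * x) * (-l) * g x + Real.exp (-l * x) * deriv g x = 0 := by
      rw [hode x]; ring
    rw [h2] at this; exact this
  have hc : ∀ x, F x = F 0 :=
    fun x => is_const_of_deriv_eq_zero (fun y => (hFd y).differentiableAt)
      (fun y => (hFd y).deriv) x 0
  intro x
  have := hc x
  simp only [hF, h0, mul_zero, neg_mul, neg_zero, Real.exp_zero, mul_one] at this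
  have hexp : Real.exp (-(l * x)) ≠ 0 := Real.exp_ne_zero _
  field_simp [Real.exp_neg] at this ⊢
  have hm : Real.exp (-(l * x)) * Real.exp (l * x) = 1 := by
    rw [← Real.exp_add]; simp
  linarith [mul_left_cancel₀ hexp (this.trans hm.symm)]

/-- Sign lemma: if `f' = a f + h` with `h > 0` off `0`, and `f 0 = 0`,
then `f > 0` on the right and `f < 0` on the left. -/
private lemma sign_lemma {f h : ℝ → ℝ} (hf : Differentiable ℝ f) (a : ℝ)
    (hde : ∀ x, deriv f x = a * f x + h x) (h0 : f 0 = 0)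
    (hpos : ∀ x ≠ 0, 0 < h x) :
    (∀ x, 0 < x → 0 < f x) ∧ (∀ x, x < 0 → f x < 0) := by
  set F : ℝ → ℝ := fun x => Real.exp (-a * x) * f x with hFdef
  have hFd : ∀ x, HasDerivAt F (Real.exp (-a * x) * h x) x := by
    intro x
    have he : HasDerivAt (fun x : ℝ => Real.exp (-a * x)) (Real.exp (-a * x) * (-a)) x := by
      have := ((hasDerivAt_id x).const_mul (-a)).exp
      simpa [mul_comm] using this
    have := he.mul (hf x).hasDerivAt
    have h2 : Real.exp (-a * x) * (-a) * f x + Real.exp (-a * x) * deriv f x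
        = Real.exp (-a * x) * h x := by
      rw [hde x]; ring
    rw [h2] at this; exact this
  have hFdiff : Differentiable ℝ F := fun x => (hFd x).differentiableAt
  have hF0 : F 0 = 0 := by simp [hFdef, h0]
  have hFpos : ∀ x ≠ 0, 0 < deriv F x := by
    intro x hx
    rw [(hFd x).deriv]
    exact mul_pos (Real.exp_pos _) (hpos x hx)
  have hmono1 : StrictMonoOn F (Set.Ici (0:ℝ)) := by
    apply strictMonoOn_of_deriv_pos (convex_Ici 0) hFdiff.continuous.continuousOn
    intro x hx
    rw [interior_Ici] at hx
    exact hFpos x (ne_of_gt hx)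
  have hmono2 : StrictMonoOn F (Set.Iic (0:ℝ)) := by
    apply strictMonoOn_of_deriv_pos (convex_Iic 0) hFdiff.continuous.continuousOn
    intro x hx
    rw [interior_Iic] at hx
    exact hFpos x (ne_of_lt hx)
  constructor
  · intro x hx
    have : F 0 < F x := hmono1 Set.self_mem_Ici (le_of_lt hx) hx
    rw [hF0] at this
    simp only [hFdef] at this
    have hE : 0 < Real.exp (-a * x) := Real.exp_pos _
    nlinarith [this]
  · intro x hx
    have : F x < F 0 := hmono2 (le_of_lt hx) Set.self_mem_Iic hx
    rw [hF0] at this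
    simp only [hFdef] at this
    have hE : 0 < Real.exp (-a * x) := Real.exp_pos _
    nlinarith [this]

/-- Fundamental solution of a second-order constant-coefficient operator is
positive right of `0` and negative left of `0`. -/
private lemma second_order_sign {f : ℝ → ℝ} (hf : ContDiff ℝ ∞ f) (p q : ℝ)
    (hode : ∀ x, deriv (deriv f) x = (p + q) * deriv f x - p * q * f x)
    (h0 : f 0 = 0) (h1 : deriv f 0 = 1) :
    (∀ x, 0 < x → 0 < f x) ∧ (∀ x, x < 0 → f x < 0) := by
  have hf' : Differentiable ℝ f := diff_of_inf hf
  have hdf : Differentiable ℝ (deriv f) := diff_of_inf (contDiff_infty_iff_deriv.mp hf).2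
  set g : ℝ → ℝ := fun x => deriv f x - q * f x with hgdef
  have hgd : Differentiable ℝ g := hdf.sub (hf'.const_mul q)
  have hgode : ∀ x, deriv g x = p * g x := by
    intro x
    have h : deriv g x = deriv (deriv f) x - q * deriv f x :=
      ((hdf x).hasDerivAt.sub ((hf' x).hasDerivAt.const_mul q)).deriv
    rw [h, hode x]; simp only [hgdef]; ring
  have hg0 : g 0 = 1 := by simp [hgdef, h0, h1]
  have hgexp := eq_exp_of_deriv hgd p hgode hg0
  have hde : ∀ x, deriv f x = q * f x + Real.exp (p * x) := by
    intro x
    have := hgexp x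
    simp only [hgdef] at this
    linarith
  exact sign_lemma hf' q hde h0 (fun x _ => Real.exp_pos _)

/-- For real `λ₀,...,λ₃`, the function
`ρ₀ = Φ₄'Φ₂ - Φ₄Φ₂'` (with `Φ₂ = Φ_{(λ₀,λ₁)}` and `Φ₄ = Φ_{(λ₀,...,λ₃)}`)
is positive for `x > 0` and negative for `x < 0`. -/
theorem stmt18 (l0 l1 l2 l3 : ℝ) (Φ2 Φ4 : ℝ → ℝ)
    (hΦ2 : ContDiff ℝ (⊤ : ℕ∞) Φ2)
    (hΦ2ode : ∀ x : ℝ, DopR l0 (DopR l1 Φ2) x = 0)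
    (hΦ2z : Φ2 0 = 0) (hΦ2o : deriv Φ2 0 = 1)
    (hΦ4 : ContDiff ℝ (⊤ : ℕ∞) Φ4)
    (hΦ4ode : ∀ x : ℝ, DopR l0 (DopR l1 (DopR l2 (DopR l3 Φ4))) x = 0)
    (hΦ4z : ∀ j < 3, iteratedDeriv j Φ4 0 = 0)
    (hΦ4o : iteratedDeriv 3 Φ4 0 = 1) :
    let ρ₀ : ℝ → ℝ := fun x => deriv Φ4 x * Φ2 x - Φ4 x * deriv Φ2 x
    (∀ x : ℝ, 0 < x → 0 < ρ₀ x) ∧ (∀ x : ℝ, x < 0 → ρ₀ x < 0) := by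
  intro ρ₀
  -- smoothness of iterated derivatives of Φ4
  have hΦ2i : ContDiff ℝ ∞ Φ2 := hΦ2.of_le (mod_cast le_top)
  have hΦ4i : ContDiff ℝ ∞ Φ4 := hΦ4.of_le (mod_cast le_top)
  have c1 : ContDiff ℝ ∞ (deriv Φ4) := (contDiff_infty_iff_deriv.mp hΦ4i).2
  have c2 : ContDiff ℝ ∞ (deriv (deriv Φ4)) := (contDiff_infty_iff_deriv.mp c1).2
  have c3 : ContDiff ℝ ∞ (deriv (deriv (deriv Φ4))) := (contDiff_infty_iff_deriv.mp c2).2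
  have d0 : Differentiable ℝ Φ4 := diff_of_inf hΦ4i
  have d1 : Differentiable ℝ (deriv Φ4) := diff_of_inf c1
  have d2 : Differentiable ℝ (deriv (deriv Φ4)) := diff_of_inf c2
  have d3 : Differentiable ℝ (deriv (deriv (deriv Φ4))) := diff_of_inf c3
  have cΦ2' : ContDiff ℝ ∞ (deriv Φ2) := (contDiff_infty_iff_deriv.mp hΦ2i).2
  have dΦ2 : Differentiable ℝ Φ2 := diff_of_inf hΦ2i
  have dΦ2' : Differentiable ℝ (deriv Φ2) := diff_of_inf cΦ2'
  -- second-order ODE for Φ2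
  have E2 : ∀ x, deriv (deriv Φ2) x = (l0 + l1) * deriv Φ2 x - l0 * l1 * Φ2 x := by
    intro x
    have := hΦ2ode x
    rw [Dop2 hΦ2i l0 l1 x] at this
    linarith
  -- abbreviations
  set a : ℝ := -(l0 + l1) with ha
  set b : ℝ := l0 * l1 with hb
  set c : ℝ := -(l2 + l3) with hc
  set d : ℝ := l2 * l3 with hd
  -- G = D_{l2} D_{l3} Φ4 as an explicit combination
  set G : ℝ → ℝ := fun x => deriv (deriv Φ4) x + c * deriv Φ4 x + d * Φ4 x with hGdef
  have hG : DopR l2 (DopR l3 Φ4) = G := by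
    funext x
    rw [Dop2 hΦ4i l2 l3 x]
    simp only [hGdef]; ring
  have hGc : ContDiff ℝ ∞ G := by
    rw [← hG]; exact DopR_contDiff (DopR_contDiff hΦ4i l3) l2
  have hG' : deriv G = fun x => deriv (deriv (deriv Φ4)) x + c * deriv (deriv Φ4) x
      + d * deriv Φ4 x := by
    funext x; exact deriv_comb3 d2 d1 d0 c d x
  have hG'' : ∀ x, deriv (deriv G) x = deriv (deriv (deriv (deriv Φ4))) x
      + c * deriv (deriv (deriv Φ4)) x + d * deriv (deriv Φ4) x := by
    intro x; rw [hG']; exact deriv_comb3 d3 d2 d1 c d x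
  -- fourth-order equation expanded
  have E4 : ∀ x, (deriv (deriv (deriv (deriv Φ4))) x + c * deriv (deriv (deriv Φ4)) x
      + d * deriv (deriv Φ4) x) - (l0 + l1) * (deriv (deriv (deriv Φ4)) x
      + c * deriv (deriv Φ4) x + d * deriv Φ4 x)
      + l0 * l1 * (deriv (deriv Φ4) x + c * deriv Φ4 x + d * Φ4 x) = 0 := by
    intro x
    have := hΦ4ode x
    rw [hG, Dop2 hGc l0 l1 x, hG''] at this
    have hG'x : deriv G x = deriv (deriv (deriv Φ4)) x + c * deriv (deriv Φ4) x
        + d * deriv Φ4 x := by rw [hG']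
    rw [hG'x] at this
    simp only [hGdef] at this
    linarith
  -- Ψ = D_{l0} D_{l1} Φ4
  set Ψ : ℝ → ℝ := fun x => deriv (deriv Φ4) x + a * deriv Φ4 x + b * Φ4 x with hΨdef
  have hΨc : ContDiff ℝ ∞ Ψ := (c2.add (contDiff_const.mul c1)).add (contDiff_const.mul hΦ4i)
  have hΨ' : deriv Ψ = fun x => deriv (deriv (deriv Φ4)) x + a * deriv (deriv Φ4) x
      + b * deriv Φ4 x := by
    funext x; exact deriv_comb3 d2 d1 d0 a b x
  have hΨ'' : ∀ x, deriv (deriv Ψ) x = deriv (deriv (deriv (deriv Φ4))) x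
      + a * deriv (deriv (deriv Φ4)) x + b * deriv (deriv Φ4) x := by
    intro x; rw [hΨ']; exact deriv_comb3 d3 d2 d1 a b x
  -- Ψ satisfies the (l2,l3) second-order ODE
  have hΨode : ∀ x, deriv (deriv Ψ) x = (l2 + l3) * deriv Ψ x - l2 * l3 * Ψ x := by
    intro x
    have h1 : deriv Ψ x = deriv (deriv (deriv Φ4)) x + a * deriv (deriv Φ4) x
        + b * deriv Φ4 x := by rw [hΨ']
    rw [hΨ'' x, h1]
    simp only [hΨdef]
    have := E4 x
    simp only [ha, hb, hc, hd] at this ⊢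
    linarith [this]
  -- initial values of Φ4 derivatives
  have z0 : Φ4 0 = 0 := by
    have := hΦ4z 0 (by norm_num); simpa [iteratedDeriv_zero] using this
  have z1 : deriv Φ4 0 = 0 := by
    have := hΦ4z 1 (by norm_num); simpa [iteratedDeriv_one] using this
  have z2 : deriv (deriv Φ4) 0 = 0 := by
    have := hΦ4z 2 (by norm_num)
    simpa [iteratedDeriv_succ, iteratedDeriv_zero] using this
  have z3 : deriv (deriv (deriv Φ4)) 0 = 1 := by
    have := hΦ4o
    simpa [iteratedDeriv_succ, iteratedDeriv_zero] using this
  have hΨ0 : Ψ 0 = 0 := by simp [hΨdef, z0, z1, z2]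
  have hΨ1 : deriv Ψ 0 = 1 := by rw [hΨ']; simp [z1, z2, z3]
  -- signs of Φ2 and Ψ
  have sΦ2 := second_order_sign hΦ2i l0 l1 E2 hΦ2z hΦ2o
  have sΨ := second_order_sign hΨc l2 l3 hΨode hΨ0 hΨ1
  -- ρ₀ satisfies ρ₀' = (l0+l1) ρ₀ + Φ2 Ψ
  have hρd : Differentiable ℝ ρ₀ := (d1.mul dΦ2).sub (d0.mul dΦ2')
  have hρode : ∀ x, deriv ρ₀ x = (l0 + l1) * ρ₀ x + Φ2 x * Ψ x := by
    intro x
    have h : HasDerivAt ρ₀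
        ((deriv (deriv Φ4) x * Φ2 x + deriv Φ4 x * deriv Φ2 x)
          - (deriv Φ4 x * deriv Φ2 x + Φ4 x * deriv (deriv Φ2) x)) x :=
      ((d1 x).hasDerivAt.mul (dΦ2 x).hasDerivAt).sub
        ((d0 x).hasDerivAt.mul (dΦ2' x).hasDerivAt)
    rw [h.deriv, E2 x]
    simp only [hΨdef, ha, hb]
    ring
  have hρ0 : ρ₀ 0 = 0 := by simp [ρ₀, hΦ2z, z0]
  have hprod : ∀ x ≠ 0, 0 < Φ2 x * Ψ x := by
    intro x hx
    rcases lt_or_gt_of_ne hx with hlt | hgt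
    · exact mul_pos_of_neg_of_neg (sΦ2.2 x hlt) (sΨ.2 x hlt)
    · exact mul_pos (sΦ2.1 x hgt) (sΨ.1 x hgt)
  exact sign_lemma hρd (l0 + l1) hρode hρ0 hprod
end
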